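/- arXiv:2605.00305 — 2 statements merged into one kernel-verified Lean document; each statement's English description precedes it below -/
import Mathlib

section
/- Under the hypotheses of Aubry's lemma (strict convexity and the flatness bounds u_q with ∑_q q^{2+ν} u_q(1/q^{1+ν}) < ∞), if additionally q^{1+ν} u_q(2/q^{1+ν}) → 0 as q → ∞ and ∑_{q=1}^∞ q^{(1+ν)θ + 1} u_q^θ(1/q^{1+ν}) < ∞ for all θ ∈ (0,1], then the set Y = {y : D²ψ(y) does not exist} has Hausdorff dimension zero, where ψ is the convex conjugate of φ. -/
/-!
Where `D²ψ(y)` fails to exist, `y` is not inside an interval on which `ψ` is affine. For every `r`,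
`ψ y = r y - φ r` on `(leftLim φp r, rightLim φp r)`, so apart from the countably many endpoints
of these intervals at rational `r`, such a `y` lies in `[leftLim φp x, rightLim φp x]` for an
irrational `x`. One-sided Dirichlet approximation (read off the Stern–Brocot walk towards `x`) gives
infinitely many reduced `p/q < x < p/q + δ_q/2`, `δ_q = q^{-(1+ν)}`, and then
`y ∈ [φp (p/q), φp (p/q + δ_q/2)]`; by the flatness of `φ` at `p/q` this interval has length
`< 2 q^{1+ν} u_q(δ_q)`. For `x` in a unit window at most `2q` numerators occur, so the
summability of `q^{(1+ν)θ+1} u_q(δ_q)^θ` and the Hausdorff–Cantelli lemma make that set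
`μH[θ]`-null for every `θ ∈ (0, 1]`.
-/

open Filter Set Topology MeasureTheory Function
open scoped ENNReal NNReal

theorem hausdorffMeasure_limsup_cofinite_eq_zero {ι X : Type*} [Countable ι] [EMetricSpace X]
    [MeasurableSpace X] [BorelSpace X] {d : ℝ} (hd : 0 < d) {E : ι → Set X}
    (hE : ∑' i, Metric.ediam (E i) ^ d ≠ ∞) : μH[d] (limsup E cofinite) = 0 := by
  set tail : Finset ι → ℝ≥0∞ := fun F => ∑' i : {i // i ∉ F}, Metric.ediam (E i) ^ d
  have htail : Tendsto tail atTop (𝓝 0) := ENNReal.tendsto_tsum_compl_atTop_zero hE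
  have hr : Tendsto (fun F => tail F ^ d⁻¹) atTop (𝓝 0) := by
    have := ((ENNReal.continuous_rpow_const (y := d⁻¹)).tendsto 0).comp htail
    rwa [ENNReal.zero_rpow_of_pos (inv_pos.2 hd)] at this
  have hdiam : ∀ F : Finset ι, ∀ i : {i // i ∉ F}, Metric.ediam (E i) ≤ tail F ^ d⁻¹ :=
    fun F i => (ENNReal.le_rpow_inv_iff hd).2 (ENNReal.le_tsum i)
  have hcover : ∀ F : Finset ι, limsup E cofinite ⊆ ⋃ i : {i // i ∉ F}, E i := by
    intro F x hx
    rw [mem_limsup_iff_frequently_mem, frequently_cofinite_iff_infinite] at hx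
    obtain ⟨i, hxi, hiF⟩ := hx.exists_notMem_finset F
    exact mem_iUnion.2 ⟨⟨i, hiF⟩, hxi⟩
  refine le_antisymm ?_ bot_le
  calc μH[d] (limsup E cofinite)
      ≤ liminf tail atTop :=
        Measure.hausdorffMeasure_le_liminf_tsum d _ _ hr (fun F (i : {i // i ∉ F}) => E i)
          (Eventually.of_forall hdiam) (Eventually.of_forall hcover)
    _ = 0 := htail.liminf_eq

lemma dimH_eq_zero_of_hausdorffMeasure_eq_zero {X : Type*} [EMetricSpace X] [MeasurableSpace X]
    [BorelSpace X] {s : Set X} (h : ∀ θ ∈ Ioc (0 : ℝ) 1, μH[θ] s = 0) : dimH s = 0 := by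
  refine le_antisymm (ENNReal.le_of_forall_pos_le_add fun ε hε _ => ?_) bot_le
  have hθ : ((min ε 1 : ℝ≥0) : ℝ) ∈ Ioc (0 : ℝ) 1 := ⟨by positivity, by simp⟩
  calc dimH s ≤ (min ε 1 : ℝ≥0) :=
        dimH_le_of_hausdorffMeasure_ne_top (by rw [h _ hθ]; exact ENNReal.zero_ne_top)
    _ ≤ 0 + ε := by simp

/-- `a/b < ξ < c/d` with `b c - a d = 1`, stated without division. -/
structure IsFareyBracket (ξ : ℝ) (a : ℤ) (b : ℕ) (c : ℤ) (d : ℕ) : Prop where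
  den_left_pos : 0 < b
  den_right_pos : 0 < d
  det : (b : ℤ) * c - a * d = 1
  left_lt : (a : ℝ) < b * ξ
  lt_right : d * ξ < c

namespace IsFareyBracket

variable {ξ : ℝ} {a c : ℤ} {b d : ℕ}

lemma neg (h : IsFareyBracket ξ a b c d) : IsFareyBracket (-ξ) (-c) d (-a) b :=
  ⟨h.den_right_pos, h.den_left_pos, by linear_combination h.det,
    by push_cast; linarith [h.lt_right], by push_cast; linarith [h.left_lt]⟩

lemma gcd_eq_one (h : IsFareyBracket ξ a b c d) : Int.gcd a b = 1 :=
  Int.isCoprime_iff_gcd_eq_one.1 ⟨-d, c, by linear_combination h.det⟩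

lemma sub_left_lt (h : IsFareyBracket ξ a b c d) : ξ - a / b < 1 / (b * d) := by
  have hb : (0 : ℝ) < b := by exact_mod_cast h.den_left_pos
  have hd : (0 : ℝ) < d := by exact_mod_cast h.den_right_pos
  have key : (b * ξ - a) * d < 1 := by
    have hdet : (b : ℝ) * c - a * d = 1 := by exact_mod_cast h.det
    nlinarith [mul_lt_mul_of_pos_left h.lt_right hb]
  rw [show ξ - a / b = (b * ξ - a) / b by field_simp, div_lt_div_iff₀ hb (by positivity)]
  nlinarith [mul_lt_mul_of_pos_left key hb]

/-- Moves the left end `k` times towards the right one, where `k = ⌊(b ξ - a) / (c - d ξ)⌋` is the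
next partial quotient of `ξ`. -/
lemma exists_refine (hξ : Irrational ξ) (h : IsFareyBracket ξ a b c d) :
    ∃ a' b' c', b ≤ b' ∧ IsFareyBracket ξ a' b' c' (b' + d) := by
  have hb := h.den_left_pos
  have hα : 0 < b * ξ - a := sub_pos.2 h.left_lt
  have hβ : 0 < c - d * ξ := sub_pos.2 h.lt_right
  set k := ⌊(b * ξ - a) / (c - d * ξ)⌋₊
  have hk : (k : ℝ) < (b * ξ - a) / (c - d * ξ) := by
    refine (Nat.floor_le (by positivity)).lt_of_ne fun hk => hξ ⟨(a + k * c) / (b + k * d : ℤ), ?_⟩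
    have : (0 : ℝ) < b + k * d := by positivity
    rw [eq_div_iff hβ.ne'] at hk
    push_cast
    field_simp
    linarith
  have hk1 : (b * ξ - a) / (c - d * ξ) < k + 1 := Nat.lt_floor_add_one _
  rw [lt_div_iff₀ hβ] at hk
  rw [div_lt_iff₀ hβ] at hk1
  refine ⟨a + k * c, b + k * d, a + k * c + c, Nat.le_add_right _ _,
    ⟨by positivity, by have := h.den_right_pos; omega, ?_, ?_, ?_⟩⟩
  · push_cast; linear_combination h.det
  · push_cast; linarith
  · push_cast; linarith

lemma exists_den_left_ge (hξ : Irrational ξ) (N : ℕ) :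
    ∃ a b c d, N ≤ b ∧ IsFareyBracket ξ a b c d := by
  induction N with
  | zero =>
    refine ⟨⌊ξ⌋, 1, ⌊ξ⌋ + 1, 1, Nat.zero_le _, one_pos, one_pos, by ring, ?_, ?_⟩
    · simpa using (Int.floor_le ξ).lt_of_ne (hξ.ne_int ⌊ξ⌋).symm
    · simp [Int.lt_floor_add_one ξ]
  | succ N ih =>
    obtain ⟨a, b, c, d, hN, h⟩ := ih
    -- refining the mirror bracket around `-ξ` moves the right end of `h`, and its new denominator
    -- `B + b` becomes the left denominator
    obtain ⟨A, B, C, -, h'⟩ := exists_refine hξ.neg h.neg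
    refine ⟨-C, B + b, -A, B, by have := h'.den_left_pos; omega, ?_⟩
    simpa using h'.neg

end IsFareyBracket

theorem Irrational.exists_div_lt_and_sub_lt_one_div_sq {ξ : ℝ} (hξ : Irrational ξ) (N : ℕ) :
    ∃ (p : ℤ) (q : ℕ), N ≤ q ∧ Int.gcd p q = 1 ∧ (p : ℝ) / q < ξ ∧ ξ - p / q < 1 / (q : ℝ) ^ 2 := by
  obtain ⟨a, b, c, d, hN, h⟩ := IsFareyBracket.exists_den_left_ge hξ N
  obtain ⟨p, q, _, hq, h'⟩ := h.exists_refine hξ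
  have hq0 : (0 : ℝ) < q := by exact_mod_cast h'.den_left_pos
  refine ⟨p, q, hN.trans hq, h'.gcd_eq_one, (div_lt_iff₀' hq0).2 h'.left_lt,
    h'.sub_left_lt.trans_le ?_⟩
  have hd : (1 : ℝ) ≤ d := by exact_mod_cast h.den_right_pos
  rw [sq]
  gcongr
  linarith

lemma hasDerivWithinAt_Ioi_of_tendsto_slope_zero_right {f : ℝ → ℝ} {x L : ℝ}
    (h : Tendsto (fun t => (f (x + t) - f x) / t) (𝓝[>] 0) (𝓝 L)) :
    HasDerivWithinAt f L (Ioi x) x := by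
  rw [hasDerivWithinAt_iff_tendsto_slope' self_notMem_Ioi]
  have hsub : Tendsto (fun y => y - x) (𝓝[>] x) (𝓝[>] 0) :=
    tendsto_nhdsWithin_of_tendsto_nhds_of_eventually_within _
      (((continuous_sub_right x).tendsto' x 0 (sub_self x)).mono_left nhdsWithin_le_nhds)
      (eventually_nhdsWithin_of_forall fun y (hy : x < y) => show 0 < y - x from sub_pos.2 hy)
  refine (h.comp hsub).congr fun y => ?_
  simp [slope_def_field]

lemma Monotone.exists_leftLim_le_and_le_rightLim {f : ℝ → ℝ} (hf : Monotone f) {y : ℝ}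
    (hlo : ∃ a, f a ≤ y) (hhi : ∃ b, y < f b) : ∃ x, leftLim f x ≤ y ∧ y ≤ rightLim f x := by
  obtain ⟨b, hb⟩ := hhi
  have hbdd : BddAbove {w | f w ≤ y} := ⟨b, fun w hw => by
    by_contra! hbw
    exact (hb.trans_le (hf hbw.le)).not_ge hw⟩
  refine ⟨sSup {w | f w ≤ y}, _root_.le_of_tendsto (hf.tendsto_leftLim _) ?_,
    _root_.ge_of_tendsto (hf.tendsto_rightLim _) ?_⟩
  · filter_upwards [self_mem_nhdsWithin] with w hw
    obtain ⟨z, hz, hwz⟩ := exists_lt_of_lt_csSup hlo hw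
    exact (hf hwz.le).trans hz
  · filter_upwards [self_mem_nhdsWithin] with w (hw : _ < w)
    by_contra! hwy
    exact hw.not_ge (le_csSup hbdd hwy.le)

namespace ConvexOn

variable {f f' : ℝ → ℝ} {x y : ℝ}

lemma slope_le_of_hasDerivWithinAt_Ioi (hf : ConvexOn ℝ univ f) (hxy : x < y) {d : ℝ}
    (hd : HasDerivWithinAt f d (Ioi y) y) : slope f x y ≤ d := by
  refine ge_of_tendsto ((hasDerivWithinAt_iff_tendsto_slope' self_notMem_Ioi).mp hd) ?_
  filter_upwards [self_mem_nhdsWithin] with z (hz : y < z)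
  simpa only [slope_def_field] using hf.slope_mono_adjacent (mem_univ x) (mem_univ z) hxy hz

variable (hf : ConvexOn ℝ univ f) (hf' : ∀ x, HasDerivWithinAt f (f' x) (Ioi x) x)
include hf hf'

lemma monotone_rightDeriv : Monotone f' := by
  intro x y hxy
  rcases hxy.lt_or_eq with hxy | rfl
  · exact (hf.le_slope_of_hasDerivWithinAt_Ioi (mem_univ x) (mem_univ y) hxy (hf' x)).trans
      (hf.slope_le_of_hasDerivWithinAt_Ioi hxy (hf' y))
  · exact le_rfl

lemma exists_lt_rightDeriv (hbdd : ∀ y, BddAbove {z | ∃ x, z = x * y - f x}) (y : ℝ) :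
    ∃ x, y < f' x := by
  by_contra! h
  obtain ⟨M, hM⟩ := hbdd (y + 1)
  set x := max 1 (M + f 0 + 1)
  have hx : 0 < x := lt_max_of_lt_left one_pos
  have hslope := (hf.slope_le_of_hasDerivWithinAt_Ioi hx (hf' x)).trans (h x)
  rw [slope_def_field, sub_zero, div_le_iff₀ hx] at hslope
  have := hM ⟨x, rfl⟩
  linarith [le_max_right 1 (M + f 0 + 1)]

lemma exists_rightDeriv_lt (hbdd : ∀ y, BddAbove {z | ∃ x, z = x * y - f x}) (y : ℝ) :
    ∃ x, f' x < y := by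
  by_contra! h
  obtain ⟨M, hM⟩ := hbdd (y - 1)
  set x := min (-1) (-(M + f 0 + 1))
  have hx : x < 0 := min_lt_of_left_lt (by norm_num)
  have hslope :=
    (h x).trans (hf.le_slope_of_hasDerivWithinAt_Ioi (mem_univ x) (mem_univ 0) hx (hf' x))
  rw [slope_def_field, zero_sub, le_div_iff₀ (neg_pos.2 hx)] at hslope
  have := hM ⟨x, rfl⟩
  linarith [min_le_right (-1) (-(M + f 0 + 1))]

lemma add_mul_sub_le_of_rightDeriv {r y : ℝ} (hlt : ∀ w < r, f' w ≤ y)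
    (hgt : ∀ w, r < w → y ≤ f' w) (x : ℝ) : f r + y * (x - r) ≤ f x := by
  have hcont : Continuous f := continuousOn_univ.1 (hf.continuousOn isOpen_univ)
  -- the secant bound holds on the open interval between `x` and `r`, hence at `r` by continuity
  rcases lt_trichotomy x r with hxr | rfl | hrx
  · have hsub : Ioo x r ⊆ {w | f w ≤ f x + y * (w - x)} := fun w ⟨hxw, hwr⟩ => by
      have h := (hf.slope_le_of_hasDerivWithinAt_Ioi hxw (hf' w)).trans (hlt w hwr)
      rw [slope_def_field, div_le_iff₀ (sub_pos.2 hxw)] at h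
      exact (by linarith : f w ≤ f x + y * (w - x))
    have : f r ≤ f x + y * (r - x) := (isClosed_le hcont (by fun_prop)).closure_subset_iff.2 hsub
      (by rw [closure_Ioo hxr.ne]; exact right_mem_Icc.2 hxr.le)
    linarith
  · simp
  · have hsub : Ioo r x ⊆ {w | f w + y * (x - w) ≤ f x} := fun w ⟨hrw, hwx⟩ => by
      have h := (hgt w hrw).trans
        (hf.le_slope_of_hasDerivWithinAt_Ioi (mem_univ w) (mem_univ x) hwx (hf' w))
      rw [slope_def_field, le_div_iff₀ (sub_pos.2 hwx)] at h
      exact (by linarith : f w + y * (x - w) ≤ f x)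
    exact (isClosed_le (by fun_prop) continuous_const).closure_subset_iff.2 hsub
      (by rw [closure_Ioo hrx.ne]; exact left_mem_Icc.2 hrx.le)

lemma rightDeriv_add_half_sub_le_of_flat {a δ η : ℝ} {U : ℝ → ℝ} (hδ : 0 < δ) (hδη : δ < η)
    (hflat : ∀ x ∈ Ioo a (a + η),
      0 < f x - f a - f' a * (x - a) ∧ f x - f a - f' a * (x - a) < U (x - a)) :
    f' (a + δ / 2) - f' a ≤ 2 * U δ / δ := by
  have h1 := (hflat (a + δ / 2) ⟨by linarith, by linarith⟩).1
  have h2 := (hflat (a + δ) ⟨by linarith, by linarith⟩).2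
  have h := hf.le_slope_of_hasDerivWithinAt_Ioi (mem_univ _) (mem_univ _)
    (by linarith : a + δ / 2 < a + δ) (hf' _)
  rw [slope_def_field, le_div_iff₀ (by linarith)] at h
  simp only [add_sub_cancel_left] at h1 h2
  rw [le_div_iff₀ hδ]
  linarith

end ConvexOn

section Conjugate

variable {f f' ψ : ℝ → ℝ} (hf : ConvexOn ℝ univ f)
  (hf' : ∀ x, HasDerivWithinAt f (f' x) (Ioi x) x)
  (hψ : ∀ y, IsLUB {z | ∃ x, z = x * y - f x} (ψ y))
include hf hf' hψ

lemma conjugate_eq_of_mem_Ioo_leftLim_rightLim {r y : ℝ}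
    (hy : y ∈ Ioo (leftLim f' r) (rightLim f' r)) : ψ y = r * y - f r := by
  have hmono := hf.monotone_rightDeriv hf'
  refine (hψ y).unique (IsGreatest.isLUB ⟨⟨r, rfl⟩, ?_⟩)
  rintro z ⟨x, rfl⟩
  have := hf.add_mul_sub_le_of_rightDeriv hf' (fun w hw => (hmono.le_leftLim hw).trans hy.1.le)
    (fun w hw => hy.2.le.trans (hmono.rightLim_le hw)) x
  linarith

lemma exists_hasDerivAt_deriv_of_mem_Ioo_leftLim_rightLim {r y : ℝ}
    (hy : y ∈ Ioo (leftLim f' r) (rightLim f' r)) : ∃ d, HasDerivAt (deriv ψ) d y := by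
  have hψ_eq : ψ =ᶠ[𝓝 y] fun z => r * z - f r := by
    filter_upwards [isOpen_Ioo.mem_nhds hy] with z hz
    exact conjugate_eq_of_mem_Ioo_leftLim_rightLim hf hf' hψ hz
  refine ⟨0, (hasDerivAt_const y r).congr_of_eventuallyEq ?_⟩
  filter_upwards [hψ_eq.deriv] with z hz
  simp [hz]

lemma setOf_not_hasDerivAt_deriv_subset :
    {y | ¬ ∃ d, HasDerivAt (deriv ψ) d y} ⊆
      (⋃ r : ℚ, {leftLim f' r, rightLim f' r}) ∪
        {y | ∃ x, Irrational x ∧ y ∈ Icc (leftLim f' x) (rightLim f' x)} := by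
  intro y hy
  have hbdd : ∀ y, BddAbove {z | ∃ x, z = x * y - f x} := fun y => ⟨ψ y, (hψ y).1⟩
  obtain ⟨x, hxl, hxr⟩ := (hf.monotone_rightDeriv hf').exists_leftLim_le_and_le_rightLim
    ((hf.exists_rightDeriv_lt hf' hbdd y).imp fun _ => le_of_lt)
    (hf.exists_lt_rightDeriv hf' hbdd y)
  by_cases hx : Irrational x
  · exact Or.inr ⟨x, hx, hxl, hxr⟩
  obtain ⟨r, rfl⟩ : x ∈ range ((↑) : ℚ → ℝ) := not_not.1 hx
  refine Or.inl (mem_iUnion.2 ⟨r, ?_⟩)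
  rcases hxl.lt_or_eq with hl | hl
  · rcases hxr.lt_or_eq with hr | hr
    · exact absurd (exists_hasDerivAt_deriv_of_mem_Ioo_leftLim_rightLim hf hf' hψ ⟨hl, hr⟩) hy
    · exact Or.inr (mem_singleton_iff.2 hr)
  · exact Or.inl hl.symm

end Conjugate

lemma eventually_one_div_sq_le_and_one_div_rpow_lt {ν : ℝ} (hν : ν ∈ Ioo (0 : ℝ) 1) :
    ∀ᶠ q : ℕ in atTop, 1 ≤ q ∧ 1 / (q : ℝ) ^ 2 ≤ 1 / (q : ℝ) ^ (1 + ν) / 2 ∧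
      1 / (q : ℝ) ^ (1 + ν) < 1 / (4 * q) := by
  have h1 := ((tendsto_rpow_atTop (sub_pos.2 hν.2)).comp
    tendsto_natCast_atTop_atTop).eventually_ge_atTop 2
  have h2 := ((tendsto_rpow_atTop hν.1).comp tendsto_natCast_atTop_atTop).eventually_gt_atTop 4
  filter_upwards [h1, h2, eventually_ge_atTop 1] with q (hq1 : 2 ≤ (q : ℝ) ^ (1 - ν))
    (hq2 : 4 < (q : ℝ) ^ ν) hq
  have hq0 : (0 : ℝ) < q := by exact_mod_cast hq
  have hsplit : (q : ℝ) ^ (1 + ν) = q * q ^ ν := by rw [Real.rpow_add hq0, Real.rpow_one]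
  have hsq : (q : ℝ) ^ 2 = q ^ (1 - ν) * (q * q ^ ν) := by
    rw [← mul_assoc, mul_comm _ (q : ℝ), mul_assoc, ← Real.rpow_add hq0]
    norm_num [sq]
  have hqν : 0 < (q : ℝ) * q ^ ν := mul_pos hq0 (Real.rpow_pos_of_pos hq0 ν)
  refine ⟨hq, ?_, ?_⟩
  · rw [div_div, hsplit, hsq]
    exact one_div_le_one_div_of_le (by positivity) (by nlinarith)
  · rw [hsplit]
    exact one_div_lt_one_div_of_lt (by positivity) (by nlinarith)

lemma two_mul_mul_rpow_le {q : ℕ} {ν θ U : ℝ} (hθ : θ ∈ Ioc (0 : ℝ) 1) (hU : 0 ≤ U) :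
    2 * (q : ℝ) * (2 * (q : ℝ) ^ (1 + ν) * U) ^ θ ≤ 4 * ((q : ℝ) ^ ((1 + ν) * θ + 1) * U ^ θ) := by
  have hq0 : (0 : ℝ) ≤ q := q.cast_nonneg
  have h2 : (2 : ℝ) ^ θ ≤ 2 := by
    simpa using Real.rpow_le_rpow_of_exponent_le (by norm_num : (1 : ℝ) ≤ 2) hθ.2
  have hX : 0 ≤ (q : ℝ) * ((q : ℝ) ^ ((1 + ν) * θ) * U ^ θ) :=
    mul_nonneg hq0 (mul_nonneg (Real.rpow_nonneg hq0 _) (Real.rpow_nonneg hU _))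
  calc 2 * (q : ℝ) * (2 * (q : ℝ) ^ (1 + ν) * U) ^ θ
      = 2 ^ θ * (2 * ((q : ℝ) * ((q : ℝ) ^ ((1 + ν) * θ) * U ^ θ))) := by
        rw [Real.mul_rpow (by positivity) hU, Real.mul_rpow (by norm_num) (by positivity),
          ← Real.rpow_mul hq0]
        ring
    _ ≤ 2 * (2 * ((q : ℝ) * ((q : ℝ) ^ ((1 + ν) * θ) * U ^ θ))) := by gcongr
    _ ≤ 4 * ((q : ℝ) ^ ((1 + ν) * θ + 1) * U ^ θ) := by
        rcases q.eq_zero_or_pos with rfl | hq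
        · simpa using mul_nonneg (Real.rpow_nonneg le_rfl ((1 + ν) * θ + 1)) (Real.rpow_nonneg hU θ)
        rw [Real.rpow_add_one (by positivity)]
        exact le_of_eq (by ring)

/-- The index `(q, p)` stands for the fraction `p / q`, kept if it is reduced, lies in
`(n - 1, n + 1)` and has `q ≥ q₀`. -/
def flatCover (f' : ℝ → ℝ) (δ : ℕ → ℝ) (q₀ : ℕ) (n : ℤ) (i : ℕ × ℤ) : Set ℝ :=
  if q₀ ≤ i.1 ∧ Int.gcd i.2 i.1 = 1 ∧ i.2 ∈ Finset.Ioo (i.1 * (n - 1)) (i.1 * (n + 1)) then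
    Icc (f' (i.2 / i.1)) (f' (i.2 / i.1 + δ i.1 / 2))
  else ∅

section FlatCover

variable {f' : ℝ → ℝ} {δ D : ℕ → ℝ} {q₀ : ℕ} {n : ℤ}

lemma tsum_ediam_flatCover_rpow_le {θ : ℝ} (hθ : 0 < θ)
    (hD : ∀ q, q₀ ≤ q → ∀ p : ℤ, Int.gcd p q = 1 → f' (p / q + δ q / 2) - f' (p / q) ≤ D q)
    (q : ℕ) :
    ∑' p : ℤ, Metric.ediam (flatCover f' δ q₀ n (q, p)) ^ θ ≤
      2 * q * ENNReal.ofReal (D q) ^ θ := by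
  set S := Finset.Ioo ((q : ℤ) * (n - 1)) (q * (n + 1))
  have hterm : ∀ p : ℤ, Metric.ediam (flatCover f' δ q₀ n (q, p)) ^ θ ≤
      (S : Set ℤ).indicator (fun _ => ENNReal.ofReal (D q) ^ θ) p := by
    intro p
    unfold flatCover
    split_ifs with h
    · rw [indicator_of_mem (Finset.mem_coe.2 h.2.2), Real.ediam_Icc]
      gcongr
      exact hD q h.1 p h.2.1
    · simp [ENNReal.zero_rpow_of_pos hθ]
  have hcard : (S.card : ℝ≥0∞) ≤ 2 * q := by
    rw [Int.card_Ioo, show (q : ℤ) * (n + 1) - q * (n - 1) - 1 = 2 * q - 1 by ring]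
    exact_mod_cast (by omega : (2 * (q : ℤ) - 1).toNat ≤ 2 * q)
  calc ∑' p : ℤ, Metric.ediam (flatCover f' δ q₀ n (q, p)) ^ θ
      ≤ ∑' p : ℤ, (S : Set ℤ).indicator (fun _ => ENNReal.ofReal (D q) ^ θ) p :=
        ENNReal.tsum_le_tsum hterm
    _ = S.card * ENNReal.ofReal (D q) ^ θ := by
        rw [← sum_eq_tsum_indicator, Finset.sum_const, nsmul_eq_mul]
    _ ≤ 2 * q * ENNReal.ofReal (D q) ^ θ := by gcongr

lemma mem_limsup_flatCover {x y : ℝ} (hx : Irrational x) (hxn : x ∈ Icc (n : ℝ) (n + 1))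
    (hy : y ∈ Icc (leftLim f' x) (rightLim f' x)) (hmono : Monotone f')
    (hδ : ∀ q, q₀ ≤ q → 1 ≤ q ∧ 1 / (q : ℝ) ^ 2 ≤ δ q / 2) :
    y ∈ limsup (flatCover f' δ q₀ n) cofinite := by
  rw [mem_limsup_iff_frequently_mem, frequently_cofinite_iff_infinite]
  refine Set.Infinite.of_image Prod.fst (Set.infinite_of_not_bddAbove fun ⟨N, hN⟩ => ?_)
  obtain ⟨p, q, hq, hpq, hlt, happrox⟩ := hx.exists_div_lt_and_sub_lt_one_div_sq (max (N + 1) q₀)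
  obtain ⟨hq1, hδq⟩ := hδ q (le_of_max_le_right hq)
  have hq0 : (0 : ℝ) < q := by exact_mod_cast hq1
  have hsq : 1 / (q : ℝ) ^ 2 ≤ 1 := by
    rw [div_le_one (by positivity)]; exact one_le_pow₀ (by exact_mod_cast hq1)
  have hpl : (q : ℤ) * (n - 1) < p := by
    have : (q : ℝ) * (n - 1) < p := by
      rw [← lt_div_iff₀' hq0]; linarith [hxn.1]
    exact_mod_cast this
  have hpr : p < (q : ℤ) * (n + 1) := by
    have : (p : ℝ) < q * (n + 1) := by
      rw [← div_lt_iff₀' hq0]; linarith [hxn.2]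
    exact_mod_cast this
  have hmem : y ∈ flatCover f' δ q₀ n (q, p) := by
    rw [flatCover, if_pos ⟨le_of_max_le_right hq, hpq, Finset.mem_Ioo.2 ⟨hpl, hpr⟩⟩]
    exact ⟨(hmono.le_leftLim hlt).trans hy.1, hy.2.trans (hmono.rightLim_le (by linarith))⟩
  have hqN : q ≤ N := hN ⟨(q, p), hmem, rfl⟩
  have hNq : N + 1 ≤ q := le_of_max_le_left hq
  omega

end FlatCover

theorem hausdorffMeasure_Icc_leftLim_rightLim_irrational_eq_zero {f f' : ℝ → ℝ} {ν θ : ℝ}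
    {u : ℕ → ℝ → ℝ} (hf : ConvexOn ℝ univ f) (hf' : ∀ x, HasDerivWithinAt f (f' x) (Ioi x) x)
    (hν : ν ∈ Ioo (0 : ℝ) 1) (hu_pos : ∀ q x, 0 < x → 0 < u q x)
    (hflat : ∀ (p : ℤ) (q : ℕ), 0 < q → Int.gcd p q = 1 →
      ∀ x ∈ Ioo (p / q : ℝ) (p / q + 1 / (4 * q)),
        0 < f x - f (p / q) - f' (p / q) * (x - p / q) ∧
        f x - f (p / q) - f' (p / q) * (x - p / q) < u q (x - p / q))
    (hθ : θ ∈ Ioc (0 : ℝ) 1)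
    (hsum : Summable fun q : ℕ => (q : ℝ) ^ ((1 + ν) * θ + 1) * u q (1 / (q : ℝ) ^ (1 + ν)) ^ θ) :
    μH[θ] {y | ∃ x, Irrational x ∧ y ∈ Icc (leftLim f' x) (rightLim f' x)} = 0 := by
  set δ : ℕ → ℝ := fun q => 1 / (q : ℝ) ^ (1 + ν)
  set D : ℕ → ℝ := fun q => 2 * (q : ℝ) ^ (1 + ν) * u q (δ q)
  obtain ⟨q₀, hq₀⟩ := eventually_atTop.1 (eventually_one_div_sq_le_and_one_div_rpow_lt hν)
  have hδ : ∀ q : ℕ, 0 < q → 0 < δ q := fun q hq => by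
    have : (0 : ℝ) < q := by exact_mod_cast hq
    positivity
  have hD : ∀ q, q₀ ≤ q → ∀ p : ℤ, Int.gcd p q = 1 → f' (p / q + δ q / 2) - f' (p / q) ≤ D q := by
    intro q hq p hpq
    obtain ⟨hq1, -, hδq⟩ := hq₀ q hq
    refine (hf.rightDeriv_add_half_sub_le_of_flat hf' (hδ q hq1) hδq
      (hflat p q hq1 hpq)).trans_eq ?_
    simp only [δ, D]
    field_simp
  have hc : ∀ q : ℕ, 0 ≤ (q : ℝ) ^ ((1 + ν) * θ + 1) * u q (δ q) ^ θ := by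
    intro q
    rcases q.eq_zero_or_pos with rfl | hq
    · have : (1 + ν) * θ + 1 ≠ 0 := by nlinarith [hν.1, hθ.1]
      simp [Real.zero_rpow this]
    · exact mul_nonneg (by positivity) (Real.rpow_nonneg (hu_pos q _ (hδ q hq)).le θ)
  have hnull : ∀ n : ℤ, μH[θ] (limsup (flatCover f' δ q₀ n) cofinite) = 0 := by
    intro n
    refine hausdorffMeasure_limsup_cofinite_eq_zero hθ.1 (ne_top_of_le_ne_top
      (b := ∑' q : ℕ, ENNReal.ofReal (4 * ((q : ℝ) ^ ((1 + ν) * θ + 1) * u q (δ q) ^ θ))) ?_ ?_)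
    · rw [← ENNReal.ofReal_tsum_of_nonneg (fun q => mul_nonneg (by norm_num) (hc q))
        (hsum.mul_left 4)]
      exact ENNReal.ofReal_ne_top
    · rw [ENNReal.tsum_prod']
      refine ENNReal.tsum_le_tsum fun q => (tsum_ediam_flatCover_rpow_le hθ.1 hD q).trans ?_
      rcases q.eq_zero_or_pos with rfl | hq
      · simp
      have hu := (hu_pos q _ (hδ q hq)).le
      rw [ENNReal.ofReal_rpow_of_nonneg (by positivity) hθ.1.le, ← ENNReal.ofReal_natCast,
        ← ENNReal.ofReal_ofNat 2, ← ENNReal.ofReal_mul (by norm_num),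
        ← ENNReal.ofReal_mul (by positivity)]
      exact ENNReal.ofReal_le_ofReal (two_mul_mul_rpow_le hθ hu)
  refine measure_mono_null (fun y ⟨x, hx, hy⟩ => mem_iUnion.2 ⟨⌊x⌋, ?_⟩) (measure_iUnion_null hnull)
  exact mem_limsup_flatCover hx ⟨Int.floor_le x, (Int.lt_floor_add_one x).le⟩ hy
    (hf.monotone_rightDeriv hf') fun q hq => ⟨(hq₀ q hq).1, (hq₀ q hq).2.1⟩

theorem stmt8_general (φ φp ψ : ℝ → ℝ) (hφ : StrictConvexOn ℝ Set.univ φ)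
    (hp : ∀ x, Tendsto (fun t => (φ (x + t) - φ x) / t) (𝓝[>] 0) (𝓝 (φp x)))
    (ν : ℝ) (hν : ν ∈ Set.Ioo (0:ℝ) 1) (u : ℕ → ℝ → ℝ)
    (hu_pos : ∀ q x, 0 < x → 0 < u q x)
    (hflat : ∀ (p : ℤ) (q : ℕ), 0 < q → Int.gcd p (q:ℤ) = 1 →
      ∀ x ∈ Set.Ioo ((p:ℝ)/(q:ℝ)) ((p:ℝ)/(q:ℝ) + 1/(4*(q:ℝ))),
        0 < φ x - φ ((p:ℝ)/(q:ℝ)) - φp ((p:ℝ)/(q:ℝ)) * (x - (p:ℝ)/(q:ℝ)) ∧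
        φ x - φ ((p:ℝ)/(q:ℝ)) - φp ((p:ℝ)/(q:ℝ)) * (x - (p:ℝ)/(q:ℝ))
          < u q (x - (p:ℝ)/(q:ℝ)))
    (hψ : ∀ y, IsLUB {z | ∃ x, z = x * y - φ x} (ψ y))
    (hsumθ : ∀ θ ∈ Set.Ioc (0:ℝ) 1,
      Summable (fun q : ℕ =>
        (q:ℝ)^((1+ν)*θ+1) * (u q (1/(q:ℝ)^((1:ℝ)+ν)))^θ)) :
    dimH {y : ℝ | ¬ ∃ d : ℝ, HasDerivAt (deriv ψ) d y} = 0 := by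
  have hφ' : ∀ x, HasDerivWithinAt φ (φp x) (Ioi x) x := fun x =>
    hasDerivWithinAt_Ioi_of_tendsto_slope_zero_right (hp x)
  have hendpoints : (⋃ r : ℚ, {leftLim φp r, rightLim φp r}).Countable :=
    countable_iUnion fun r => (countable_singleton _).insert _
  refine le_antisymm ?_ bot_le
  calc dimH {y : ℝ | ¬ ∃ d : ℝ, HasDerivAt (deriv ψ) d y}
      ≤ dimH ((⋃ r : ℚ, {leftLim φp r, rightLim φp r}) ∪
          {y | ∃ x, Irrational x ∧ y ∈ Icc (leftLim φp x) (rightLim φp x)}) :=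
        dimH_mono (setOf_not_hasDerivAt_deriv_subset hφ.convexOn hφ' hψ)
    _ = 0 := by
        rw [dimH_union, dimH_countable hendpoints, dimH_eq_zero_of_hausdorffMeasure_eq_zero
          fun θ hθ => hausdorffMeasure_Icc_leftLim_rightLim_irrational_eq_zero hφ.convexOn hφ' hν
            hu_pos hflat hθ (hsumθ θ hθ), max_self]

theorem stmt8 (φ φp ψ : ℝ → ℝ) (hφ : StrictConvexOn ℝ Set.univ φ)
    (hp : ∀ x, Tendsto (fun t => (φ (x + t) - φ x) / t) (𝓝[>] 0) (𝓝 (φp x)))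
    (ν : ℝ) (hν : ν ∈ Set.Ioo (0:ℝ) 1) (u : ℕ → ℝ → ℝ)
    (hu_pos : ∀ q x, 0 < x → 0 < u q x)
    (hflat : ∀ (p : ℤ) (q : ℕ), 0 < q → Int.gcd p (q:ℤ) = 1 →
      ∀ x ∈ Set.Ioo ((p:ℝ)/(q:ℝ)) ((p:ℝ)/(q:ℝ) + 1/(4*(q:ℝ))),
        0 < φ x - φ ((p:ℝ)/(q:ℝ)) - φp ((p:ℝ)/(q:ℝ)) * (x - (p:ℝ)/(q:ℝ)) ∧
        φ x - φ ((p:ℝ)/(q:ℝ)) - φp ((p:ℝ)/(q:ℝ)) * (x - (p:ℝ)/(q:ℝ))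
          < u q (x - (p:ℝ)/(q:ℝ)))
    (hsum : Summable (fun q : ℕ => (q:ℝ)^((2:ℝ)+ν) * u q (1/(q:ℝ)^((1:ℝ)+ν))))
    (hψ : ∀ y, IsLUB {z | ∃ x, z = x * y - φ x} (ψ y))
    (hu_lim : Tendsto (fun q : ℕ => (q:ℝ)^((1:ℝ)+ν) * u q (2/(q:ℝ)^((1:ℝ)+ν)))
      atTop (𝓝 0))
    (hsumθ : ∀ θ ∈ Set.Ioc (0:ℝ) 1,
      Summable (fun q : ℕ =>
        (q:ℝ)^((1+ν)*θ+1) * (u q (1/(q:ℝ)^((1:ℝ)+ν)))^θ)) :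
    dimH {y : ℝ | ¬ ∃ d : ℝ, HasDerivAt (deriv ψ) d y} = 0 :=
  stmt8_general φ φp ψ hφ hp ν hν u hu_pos hflat hψ hsumθ
end

section
/- Let φ: ℝ → ℝ be strictly convex with superlinear growth, ψ its convex conjugate, and P ⊂ ℝ a set of positive Lebesgue measure such that for every x₀ ∈ P there exist c(x₀), δ(x₀) > 0 with φ(x) − φ(x₀) − y₀(x − x₀) ≥ c(x₀)|x − x₀|² for all x ∈ B(x₀, δ(x₀)) and all y₀ in the subdifferential D⁻φ(x₀). Then the set where the second derivative D²ψ exists and is strictly positive has positive Lebesgue measure; in particular D²ψ does not vanish almost everywhere. -/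
/-!
For each `y` the function `x ↦ x * y - φ x` has a unique maximiser `g y` (superlinear growth and
strict convexity), i.e. `g y` is the unique point with `y ∈ subdiff φ (g y)`. Then `ψ' = g`, and `g`
is monotone and surjective, hence continuous. Quadratic growth of `φ` at `x₀ ∈ P` makes `g` pointwise
Lipschitz at every `y₀ ∈ subdiff φ x₀`, where `g y₀ = x₀`. If `g' > 0` only on a null set, then
`g' = 0` almost everywhere (Lebesgue), `g` maps `{g' = 0}` to a null set (Sard), and pointwise
Lipschitz maps send null sets to null sets; so `P`, which is covered by the image under `g` of
`⋃ x₀ ∈ P, subdiff φ x₀`, would be null.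
-/

open Filter Set Topology MeasureTheory

/-- The subdifferential of `φ` at `x`. -/
def subdiff (φ : ℝ → ℝ) (x : ℝ) : Set ℝ :=
  {y | ∀ x', φ x + y * (x' - x) ≤ φ x'}

open scoped NNReal

section Subdifferential

variable {φ : ℝ → ℝ}

lemma sub_mul_sub_nonneg_of_mem_subdiff {x₁ x₂ y₁ y₂ : ℝ} (h₁ : y₁ ∈ subdiff φ x₁)
    (h₂ : y₂ ∈ subdiff φ x₂) : 0 ≤ (y₂ - y₁) * (x₂ - x₁) := by
  nlinarith [h₁ x₂, h₂ x₁]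

lemma monotone_of_forall_mem_subdiff {g : ℝ → ℝ} (hg : ∀ y, y ∈ subdiff φ (g y)) :
    Monotone g := fun y₁ y₂ h => by
  obtain rfl | hlt := h.eq_or_lt
  · rfl
  · exact sub_nonneg.1 (nonneg_of_mul_nonneg_right
      (sub_mul_sub_nonneg_of_mem_subdiff (hg y₁) (hg y₂)) (sub_pos.2 hlt))

lemma ConvexOn.subdiff_nonempty (hφ : ConvexOn ℝ univ φ) (x : ℝ) : (subdiff φ x).Nonempty := by
  refine ⟨derivWithin φ (Ioi x) x, fun x' => ?_⟩
  rcases lt_trichotomy x' x with h | rfl | h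
  · have hslope := (hφ.slope_le_leftDeriv_of_mem_interior (mem_univ x') (by simp) h).trans
      (hφ.leftDeriv_le_rightDeriv_of_mem_interior (by simp))
    rw [slope_def_field, div_le_iff₀ (sub_pos.2 h)] at hslope
    linarith
  · simp
  · have hslope := hφ.rightDeriv_le_slope_of_mem_interior (by simp) (mem_univ x') h
    rw [slope_def_field, le_div_iff₀ (sub_pos.2 h)] at hslope
    linarith

lemma StrictConvexOn.eq_of_mem_subdiff (hφ : StrictConvexOn ℝ univ φ) {x₁ x₂ y : ℝ}
    (h₁ : y ∈ subdiff φ x₁) (h₂ : y ∈ subdiff φ x₂) : x₁ = x₂ := by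
  by_contra hne
  have hmid := hφ.2 (mem_univ x₁) (mem_univ x₂) hne (by norm_num : (0:ℝ) < 1 / 2)
    (by norm_num : (0:ℝ) < 1 / 2) (by norm_num)
  simp only [smul_eq_mul] at hmid
  linarith [h₁ (1 / 2 * x₁ + 1 / 2 * x₂), h₂ (1 / 2 * x₁ + 1 / 2 * x₂)]

lemma exists_mem_subdiff_of_superlinear (hφ : Continuous φ)
    (hsl : Tendsto (fun x => φ x / |x|) (Bornology.cobounded ℝ) atTop) (y : ℝ) :
    ∃ x, y ∈ subdiff φ x := by
  have hlim : Tendsto (fun x => φ x - x * y) (cocompact ℝ) atTop := by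
    rw [← Metric.cobounded_eq_cocompact]
    refine tendsto_atTop_mono' _ ?_ (tendsto_norm_cobounded_atTop.atTop_mul_atTop₀
      (tendsto_atTop_add_const_right _ (-|y|) hsl))
    filter_upwards [Bornology.eventually_ne_cobounded 0] with x hx
    rw [Real.norm_eq_abs, mul_add, mul_div_cancel₀ _ (abs_pos.2 hx).ne']
    nlinarith [le_abs_self (x * y), abs_mul x y]
  obtain ⟨x, hx⟩ := (show Continuous fun x => φ x - x * y by fun_prop).exists_forall_le hlim
  exact ⟨x, fun x' => by linarith [hx x']⟩

lemma ConvexOn.le_add_mul_of_mem_subdiff (hφ : ConvexOn ℝ univ φ) {x y : ℝ}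
    (hy : y ∈ subdiff φ x) (x₀ : ℝ) {t : ℝ} (ht₀ : 0 ≤ t) (ht₁ : t ≤ 1) :
    φ (x₀ + t * (x - x₀)) ≤ φ x₀ + t * y * (x - x₀) := by
  have hconv := hφ.2 (mem_univ x₀) (mem_univ x) (sub_nonneg.2 ht₁) ht₀ (by ring)
  simp only [smul_eq_mul] at hconv
  rw [show (1 - t) * x₀ + t * x = x₀ + t * (x - x₀) by ring] at hconv
  nlinarith [mul_le_mul_of_nonneg_left (hy x₀) ht₀]

lemma ConvexOn.abs_sub_le_of_mem_subdiff (hφ : ConvexOn ℝ univ φ) {x₀ y₀ c δ : ℝ} (hc : 0 < c)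
    (hgrowth : ∀ x ∈ Metric.ball x₀ δ, c * |x - x₀| ^ 2 ≤ φ x - φ x₀ - y₀ * (x - x₀))
    {x y : ℝ} (hy : y ∈ subdiff φ x) (hyy₀ : |y - y₀| < c * δ / 2) :
    |x - x₀| ≤ |y - y₀| / c := by
  rcases (abs_nonneg (x - x₀)).eq_or_lt with hr | hr
  · rw [← hr]; positivity
  have hδ : 0 < δ := by nlinarith [abs_nonneg (y - y₀)]
  set s := min |x - x₀| (δ / 2) with hs_def
  have hs : 0 < s := lt_min hr (by positivity)
  set t := s / |x - x₀|
  have ht₀ : 0 ≤ t := by positivity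
  have ht₁ : t ≤ 1 := div_le_one_of_le₀ (min_le_left _ _) hr.le
  -- `z` is the point of `[x₀, x]` at distance `s` from `x₀`; the growth bound applies there.
  set z := x₀ + t * (x - x₀)
  have hz : |z - x₀| = s := by
    simp only [z, t, add_sub_cancel_left, abs_mul, abs_of_nonneg ht₀, div_mul_cancel₀ _ hr.ne']
  have hzball : z ∈ Metric.ball x₀ δ := by
    rw [Metric.mem_ball, Real.dist_eq, hz]
    exact (min_le_right _ _).trans_lt (by linarith)
  have hupper : φ z - φ x₀ - y₀ * (z - x₀) ≤ |y - y₀| * s :=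
    calc φ z - φ x₀ - y₀ * (z - x₀) ≤ (y - y₀) * (z - x₀) := by
          have := hφ.le_add_mul_of_mem_subdiff hy x₀ ht₀ ht₁
          simp only [z] at this ⊢
          linarith
      _ ≤ |y - y₀| * s := hz ▸ (le_abs_self _).trans (abs_mul _ _).le
  have hcs : c * s ≤ |y - y₀| := by
    have := (hgrowth z hzball).trans hupper
    rw [hz] at this
    nlinarith
  rw [le_div_iff₀' hc]
  rcases min_cases |x - x₀| (δ / 2) with ⟨hmin, -⟩ | ⟨hmin, -⟩
  · rwa [hs_def, hmin] at hcs
  · rw [hs_def, hmin] at hcs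
    linarith

lemma ConvexOn.isBigO_sub_of_mem_subdiff (hφ : ConvexOn ℝ univ φ) {g : ℝ → ℝ}
    (hg : ∀ y, y ∈ subdiff φ (g y)) {x₀ y₀ c δ : ℝ} (hc : 0 < c) (hδ : 0 < δ)
    (hgrowth : ∀ x ∈ Metric.ball x₀ δ, c * |x - x₀| ^ 2 ≤ φ x - φ x₀ - y₀ * (x - x₀)) :
    (fun y => g y - x₀) =O[𝓝 y₀] fun y => y - y₀ := by
  refine Asymptotics.IsBigO.of_bound c⁻¹ ?_
  filter_upwards [Metric.ball_mem_nhds y₀ (by positivity : 0 < c * δ / 2)] with y hy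
  rw [Metric.mem_ball, Real.dist_eq] at hy
  simpa only [Real.norm_eq_abs, div_eq_inv_mul] using
    hφ.abs_sub_le_of_mem_subdiff hc hgrowth (hg y) hy

end Subdifferential

lemma hasDerivAt_of_mul_sub_le_sub_le_mul {f g : ℝ → ℝ} {x : ℝ} (hg : ContinuousAt g x)
    (hlow : ∀ y, g x * (y - x) ≤ f y - f x) (hup : ∀ y, f y - f x ≤ g y * (y - x)) :
    HasDerivAt f (g x) x := by
  rw [hasDerivAt_iff_isLittleO]
  have hsmall : (fun y => (g y - g x) * (y - x)) =o[𝓝 x] fun y => y - x := by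
    simpa only [one_mul] using ((Asymptotics.isLittleO_one_iff ℝ).2
      (tendsto_sub_nhds_zero_iff.2 hg.tendsto)).mul_isBigO (Asymptotics.isBigO_refl _ _)
  refine Asymptotics.IsBigO.trans_isLittleO (Asymptotics.IsBigO.of_bound 1 ?_) hsmall
  filter_upwards with y
  rw [one_mul, Real.norm_eq_abs, Real.norm_eq_abs, abs_le, smul_eq_mul]
  constructor <;> nlinarith [hlow y, hup y, neg_abs_le ((g y - g x) * (y - x)),
    le_abs_self ((g y - g x) * (y - x))]

lemma hasDerivAt_of_isLUB_of_mem_subdiff {φ ψ g : ℝ → ℝ}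
    (hψ : ∀ y, IsLUB {z | ∃ x, z = x * y - φ x} (ψ y)) (hg : ∀ y, y ∈ subdiff φ (g y))
    (hcont : Continuous g) (y : ℝ) : HasDerivAt ψ (g y) y := by
  have hψ_eq : ∀ y, ψ y = g y * y - φ (g y) := fun y =>
    (hψ y).unique (IsGreatest.isLUB ⟨⟨g y, rfl⟩, by rintro _ ⟨x, rfl⟩; linarith [hg y x]⟩)
  refine hasDerivAt_of_mul_sub_le_sub_le_mul hcont.continuousAt (fun y' => ?_) fun y' => ?_
  · rw [hψ_eq, hψ_eq]; linarith [hg y' (g y)]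
  · rw [hψ_eq, hψ_eq]; linarith [hg y (g y')]

lemma LipschitzOnWith.volume_image_eq_zero {K : ℝ≥0} {f : ℝ → ℝ} {s : Set ℝ}
    (hf : LipschitzOnWith K f s) (hs : volume s = 0) : volume (f '' s) = 0 := by
  simpa only [hausdorffMeasure_real, hs, mul_zero, nonpos_iff_eq_zero] using
    hf.hausdorffMeasure_image_le zero_le_one

lemma exists_nat_dist_le_of_isBigO {f : ℝ → ℝ} {x : ℝ}
    (hf : (fun y => f y - f x) =O[𝓝 x] fun y => y - x) :
    ∃ n : ℕ, ∀ y, dist y x < 1 / (n + 1) → dist (f y) (f x) ≤ (n + 1 : ℝ≥0) * dist y x := by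
  obtain ⟨C, hC⟩ := hf.bound
  obtain ⟨ε, hε, hball⟩ := Metric.eventually_nhds_iff.1 hC
  obtain ⟨n, hn⟩ := exists_nat_gt (max C (1 / ε))
  refine ⟨n, fun y hy => ?_⟩
  have hCn : C ≤ n + 1 := by linarith [le_max_left C (1 / ε)]
  have hεn : 1 / (n + 1 : ℝ) < ε := by
    rw [div_lt_iff₀ (by positivity), ← div_lt_iff₀' hε]
    linarith [le_max_right C (1 / ε)]
  push_cast
  simpa only [Real.dist_eq, Real.norm_eq_abs] using
    (hball (hy.trans hεn)).trans (mul_le_mul_of_nonneg_right hCn (norm_nonneg _))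

lemma LipschitzOnWith.inter_Ico_of_forall_dist_le {f : ℝ → ℝ} {s : Set ℝ} {K : ℝ≥0} {r : ℝ}
    (hs : ∀ x ∈ s, ∀ y, dist y x < r → dist (f y) (f x) ≤ K * dist y x) (a : ℝ) :
    LipschitzOnWith K f (s ∩ Ico a (a + r)) := by
  refine LipschitzOnWith.of_dist_le_mul fun x ⟨hxs, hxa, hxr⟩ y ⟨_, hya, hyr⟩ => ?_
  have hxy : dist y x < r := by
    rw [Real.dist_eq, abs_lt]
    constructor <;> linarith
  rw [dist_comm (f x), dist_comm x]
  exact hs x hxs y hxy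

lemma volume_image_eq_zero_of_forall_isBigO {f : ℝ → ℝ} {s : Set ℝ} (hs : volume s = 0)
    (hf : ∀ x ∈ s, (fun y => f y - f x) =O[𝓝 x] fun y => y - x) : volume (f '' s) = 0 := by
  set t : ℕ → Set ℝ := fun n =>
    {x ∈ s | ∀ y, dist y x < 1 / (n + 1) → dist (f y) (f x) ≤ (n + 1 : ℝ≥0) * dist y x}
  have hcover : s ⊆ ⋃ (n : ℕ) (k : ℤ),
      t n ∩ Ico (k • (1 / (n + 1) : ℝ)) (k • (1 / (n + 1) : ℝ) + 1 / (n + 1)) := by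
    intro x hx
    obtain ⟨n, hn⟩ := exists_nat_dist_le_of_isBigO (hf x hx)
    obtain ⟨k, hk⟩ := mem_iUnion.1
      ((iUnion_Ico_zsmul (by positivity : (0 : ℝ) < 1 / (n + 1))).symm ▸ mem_univ x)
    rw [add_zsmul, one_zsmul] at hk
    exact mem_iUnion₂.2 ⟨n, k, ⟨hx, hn⟩, hk⟩
  refine measure_mono_null ((image_mono hcover).trans (image_iUnion₂ _ _).subset) ?_
  refine measure_iUnion_null fun n => measure_iUnion_null fun k => ?_
  exact (LipschitzOnWith.inter_Ico_of_forall_dist_le (fun x hx => hx.2) _).volume_image_eq_zero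
    (measure_mono_null (inter_subset_left.trans (sep_subset _ _)) hs)

lemma volume_image_setOf_hasDerivAt_zero (f : ℝ → ℝ) :
    volume (f '' {x | HasDerivAt f 0 x}) = 0 := by
  refine addHaar_image_eq_zero_of_det_fderivWithin_eq_zero volume
    (f' := fun _ => ContinuousLinearMap.smulRight (1 : ℝ →L[ℝ] ℝ) 0) (fun x hx => ?_) fun _ _ => ?_
  · exact (show HasDerivAt f 0 x from hx).hasDerivWithinAt.hasFDerivWithinAt
  · simp

lemma Monotone.ae_hasDerivAt_zero {g : ℝ → ℝ} (hg : Monotone g)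
    (hpos : volume {x | ∃ d > 0, HasDerivAt g d x} = 0) : ∀ᵐ x, HasDerivAt g 0 x := by
  filter_upwards [hg.ae_differentiableAt, measure_eq_zero_iff_ae_notMem.1 hpos] with x hdiff hx
  obtain h | h := (hdiff.hasDerivAt.nonneg_of_monotone hg).lt_or_eq
  · exact absurd ⟨_, h, hdiff.hasDerivAt⟩ hx
  · exact h ▸ hdiff.hasDerivAt

lemma Monotone.volume_image_eq_zero_of_isBigO {g : ℝ → ℝ} (hg : Monotone g)
    (hpos : volume {x | ∃ d > 0, HasDerivAt g d x} = 0) {s : Set ℝ}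
    (hs : ∀ x ∈ s, (fun y => g y - g x) =O[𝓝 x] fun y => y - x) : volume (g '' s) = 0 := by
  set A := {x | HasDerivAt g 0 x}
  have hsplit : g '' s ⊆ g '' A ∪ g '' (s \ A) := by
    rw [← image_union, union_sdiff_self]
    exact image_mono subset_union_right
  refine measure_mono_null hsplit (measure_union_null (volume_image_setOf_hasDerivAt_zero g) ?_)
  exact volume_image_eq_zero_of_forall_isBigO
    (measure_mono_null (sdiff_subset_compl _ _) (ae_iff.1 (hg.ae_hasDerivAt_zero hpos)))
    fun x hx => hs x hx.1

theorem stmt13_general (φ ψ : ℝ → ℝ) (hφ : StrictConvexOn ℝ Set.univ φ)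
    (hsl : Tendsto (fun x => φ x / |x|) (Bornology.cobounded ℝ) atTop)
    (hψ : ∀ y, IsLUB {z | ∃ x, z = x * y - φ x} (ψ y))
    (P : Set ℝ) (hP : 0 < volume P)
    (hstrong : ∀ x₀ ∈ P, ∃ c > (0:ℝ), ∃ δ > (0:ℝ), ∀ y₀ ∈ subdiff φ x₀,
      ∀ x ∈ Metric.ball x₀ δ, c * |x - x₀|^2 ≤ φ x - φ x₀ - y₀ * (x - x₀)) :
    0 < volume {y : ℝ | ∃ d > (0:ℝ), HasDerivAt (deriv ψ) d y} := by
  choose g hg using exists_mem_subdiff_of_superlinear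
    (continuousOn_univ.1 (hφ.convexOn.continuousOn isOpen_univ)) hsl
  have hg_eq : ∀ {x y}, y ∈ subdiff φ x → g y = x := hφ.eq_of_mem_subdiff (hg _)
  have hmono : Monotone g := monotone_of_forall_mem_subdiff hg
  have hcont : Continuous g := hmono.continuous_of_surjective fun x =>
    (hφ.convexOn.subdiff_nonempty x).imp fun _ => hg_eq
  have hderiv : deriv ψ = g :=
    funext fun y => (hasDerivAt_of_isLUB_of_mem_subdiff hψ hg hcont y).deriv
  rw [hderiv, pos_iff_ne_zero]
  intro hpos
  set Q := {y | ∃ x₀ ∈ P, y ∈ subdiff φ x₀}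
  have hPQ : P ⊆ g '' Q := fun x₀ hx₀ =>
    let ⟨y₀, hy₀⟩ := hφ.convexOn.subdiff_nonempty x₀
    ⟨y₀, ⟨x₀, hx₀, hy₀⟩, hg_eq hy₀⟩
  have hQ : ∀ y₀ ∈ Q, (fun y => g y - g y₀) =O[𝓝 y₀] fun y => y - y₀ := by
    rintro y₀ ⟨x₀, hx₀, hy₀⟩
    obtain ⟨c, hc, δ, hδ, hgrowth⟩ := hstrong x₀ hx₀
    rw [hg_eq hy₀]
    exact hφ.convexOn.isBigO_sub_of_mem_subdiff hg hc hδ (hgrowth y₀ hy₀)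
  exact hP.ne' (measure_mono_null hPQ (hmono.volume_image_eq_zero_of_isBigO hpos hQ))

theorem stmt13 (φ ψ : ℝ → ℝ) (hφ : StrictConvexOn ℝ Set.univ φ)
    (hsl : Tendsto (fun x => φ x / |x|) (Bornology.cobounded ℝ) atTop)
    (hψ : ∀ y, IsLUB {z | ∃ x, z = x * y - φ x} (ψ y))
    (P : Set ℝ) (hPmeas : MeasurableSet P) (hP : 0 < volume P)
    (hstrong : ∀ x₀ ∈ P, ∃ c > (0:ℝ), ∃ δ > (0:ℝ), ∀ y₀ ∈ subdiff φ x₀,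
      ∀ x ∈ Metric.ball x₀ δ, c * |x - x₀|^2 ≤ φ x - φ x₀ - y₀ * (x - x₀)) :
    0 < volume {y : ℝ | ∃ d > (0:ℝ), HasDerivAt (deriv ψ) d y} :=
  stmt13_general φ ψ hφ hsl hψ P hP hstrong
end
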